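/- arXiv:2401.17128 — 7 statements merged into one kernel-verified Lean document; each statement's English description precedes it below -/
import Mathlib

section
/- For any real numbers N ≥ 1 and λ > 0, the integral ∫₀ᵀ t^N e^{-λt} dt is at most 2T^{N+1}/(N+1+λT), for every T > 0. -/
theorem stmt_0 (N : ℕ) (hN : 1 ≤ N) (lam : ℝ) (hlam : 0 < lam) (T : ℝ) (hT : 0 < T) :
    ∫ t in (0:ℝ)..T, t ^ N * Real.exp (-lam * t) ≤
      2 * T ^ (N + 1) / ((N : ℝ) + 1 + lam * T) := by
  have hcont : Continuous fun t : ℝ => t ^ N * Real.exp (-lam * t) := by continuity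
  have hint : IntervalIntegrable (fun t : ℝ => t ^ N * Real.exp (-lam * t)) MeasureTheory.volume 0 T :=
    hcont.intervalIntegrable _ _
  have hden : 0 < (N : ℝ) + 1 + lam * T := by positivity
  have hTp : 0 < T ^ (N + 1) := pow_pos hT _
  rcases le_or_gt (lam * T) ((N : ℝ) + 1) with h | h
  · have h1 : (∫ t in (0:ℝ)..T, t ^ N * Real.exp (-lam * t)) ≤ ∫ t in (0:ℝ)..T, t ^ N := by
      apply intervalIntegral.integral_mono_on hT.le hint ((continuous_pow N).intervalIntegrable _ _)
      intro t ht
      have ht0 : 0 ≤ t := ht.1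
      have he : Real.exp (-lam * t) ≤ 1 := by
        apply Real.exp_le_one_iff.mpr
        nlinarith
      nlinarith [pow_nonneg ht0 N, Real.exp_pos (-lam * t)]
    rw [integral_pow] at h1
    have : (T ^ (N + 1) - 0 ^ (N + 1)) / ((N : ℝ) + 1) ≤ 2 * T ^ (N + 1) / ((N : ℝ) + 1 + lam * T) := by
      rw [zero_pow (Nat.succ_ne_zero N), sub_zero, div_le_div_iff₀ (by positivity) hden]
      nlinarith
    linarith
  · have hexp : IntervalIntegrable (fun t : ℝ => Real.exp (-lam * t)) MeasureTheory.volume 0 T :=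
      (Real.continuous_exp.comp (continuous_const.mul continuous_id)).intervalIntegrable _ _
    have h1 : (∫ t in (0:ℝ)..T, t ^ N * Real.exp (-lam * t)) ≤
        ∫ t in (0:ℝ)..T, T ^ N * Real.exp (-lam * t) := by
      apply intervalIntegral.integral_mono_on hT.le hint (hexp.const_mul _)
      intro t ht
      have := Real.exp_pos (-lam * t)
      have hp : t ^ N ≤ T ^ N := pow_le_pow_left₀ ht.1 ht.2 N
      nlinarith
    have hI : (∫ t in (0:ℝ)..T, Real.exp (-lam * t)) = (1 - Real.exp (-lam * T)) / lam := by
      have := intervalIntegral.integral_comp_mul_left (a := (0:ℝ)) (b := T)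
        (fun x => Real.exp x) (neg_ne_zero.mpr hlam.ne')
      simp only [mul_zero, smul_eq_mul] at this
      rw [this, integral_exp, Real.exp_zero]
      field_simp [hlam.ne']
      ring
    rw [intervalIntegral.integral_const_mul, hI] at h1
    have h2 : T ^ N * ((1 - Real.exp (-lam * T)) / lam) ≤ 2 * T ^ (N + 1) / ((N : ℝ) + 1 + lam * T) := by
      have hTN : 0 < T ^ N := pow_pos hT N
      have he : 0 < Real.exp (-lam * T) := Real.exp_pos _
      rw [mul_div_assoc', div_le_div_iff₀ hlam hden, pow_succ]
      have k1 : T ^ N * (1 - Real.exp (-lam * T)) * ((N : ℝ) + 1 + lam * T) ≤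
          T ^ N * ((N : ℝ) + 1 + lam * T) := by
        nlinarith [mul_nonneg (mul_nonneg hTN.le hden.le) he.le]
      have k2 : T ^ N * ((N : ℝ) + 1 + lam * T) ≤ 2 * (T ^ N * T) * lam := by nlinarith
      linarith
    linarith
end

section
/- For every real x ≥ 0 and natural number N ≥ 1, one has (1/N!)·(x/(1+x))^N · e^x ≤ ∑_{n=N}^∞ x^n/n!. -/
theorem stmt_1 (x : ℝ) (hx : 0 ≤ x) (N : ℕ) (hN : 1 ≤ N) :
    (1 / (Nat.factorial N : ℝ)) * (x / (1 + x)) ^ N * Real.exp x ≤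
      ∑' n : ℕ, x ^ (n + N) / (Nat.factorial (n + N) : ℝ) := by
  have hx1 : (0:ℝ) < 1 + x := by linarith
  set a : ℕ → ℝ := fun j => if j ≤ N then (N.choose j : ℝ) * x ^ j else 0 with ha_def
  set b : ℕ → ℝ := fun m => x ^ (m + N) / (Nat.factorial (m + N) : ℝ) with hb_def
  have ha0 : ∀ j, 0 ≤ a j := by
    intro j
    simp only [ha_def]
    split <;> positivity
  have hb0 : ∀ m, 0 ≤ b m := by intro m; positivity
  have ha : Summable a := by
    apply summable_of_ne_finset_zero (s := Finset.range (N+1))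
    intro j hj
    simp only [Finset.mem_range, not_lt] at hj
    simp only [ha_def]
    rw [if_neg (by omega)]
  have hb : Summable b := by
    exact (summable_nat_add_iff N).2 (Real.summable_pow_div_factorial x)
  have hexp : Real.exp x = ∑' n : ℕ, x ^ n / (Nat.factorial n : ℝ) := by
    rw [Real.exp_eq_exp_ℝ, NormedSpace.exp_eq_tsum_div]
  have hsum_a : ∑' j, a j = (1 + x) ^ N := by
    rw [tsum_eq_sum (s := Finset.range (N+1))
      (by intro j hj; simp only [Finset.mem_range, not_lt] at hj
          simp only [ha_def]; rw [if_neg (by omega)])]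
    rw [add_comm (1:ℝ) x, add_pow]
    apply Finset.sum_congr rfl
    intro j hj
    simp only [Finset.mem_range] at hj
    simp only [ha_def]
    rw [if_pos (by omega)]
    ring
  -- the injection
  have key : (∑' k : ℕ, x ^ (k + N) / ((Nat.factorial k : ℝ) * (Nat.factorial N : ℝ)))
      ≤ ∑' z : ℕ × ℕ, a z.1 * b z.2 := by
    apply Summable.tsum_le_tsum_of_inj (fun k => (min N k, k - min N k))
    · intro k1 k2 h
      have h1 : min N k1 = min N k2 := congrArg Prod.fst h
      have h2 : k1 - min N k1 = k2 - min N k2 := congrArg Prod.snd h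
      omega
    · intro c _
      exact mul_nonneg (ha0 _) (hb0 _)
    · intro k
      set j := min N k with hj
      set m := k - j with hm
      have hjN : j ≤ N := min_le_left _ _
      have hfact : ((m + N).factorial : ℝ) ≤ (N.choose j : ℝ) * (Nat.factorial k : ℝ) *
          (Nat.factorial N : ℝ) := by
        have : (m + N).factorial ≤ N.choose j * Nat.factorial k * Nat.factorial N := by
          rcases le_or_gt k N with hkN | hkN
          · have hj' : j = k := by omega
            have hm' : m = 0 := by omega
            have hc : 1 ≤ N.choose j := Nat.succ_le_of_lt (Nat.choose_pos (by omega))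
            have hk1 : 1 ≤ Nat.factorial k := Nat.one_le_iff_ne_zero.2 (Nat.factorial_ne_zero k)
            calc (m + N).factorial = N.factorial := by rw [hm', zero_add]
              _ = 1 * 1 * N.factorial := by ring
              _ ≤ N.choose j * Nat.factorial k * Nat.factorial N := by
                  apply Nat.mul_le_mul (Nat.mul_le_mul hc hk1) le_rfl
          · have hj' : j = N := by omega
            have hm' : m + N = k := by omega
            have hc : 1 ≤ N.choose j := Nat.succ_le_of_lt (Nat.choose_pos (by omega))
            have hN1 : 1 ≤ Nat.factorial N := Nat.one_le_iff_ne_zero.2 (Nat.factorial_ne_zero N)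
            calc (m + N).factorial = k.factorial := by rw [hm']
              _ = 1 * k.factorial * 1 := by ring
              _ ≤ N.choose j * Nat.factorial k * Nat.factorial N := by
                  apply Nat.mul_le_mul (Nat.mul_le_mul hc le_rfl) hN1
        exact_mod_cast this
      have hxpow : x ^ j * x ^ (m + N) = x ^ (k + N) := by
        rw [← pow_add]; congr 1; omega
      simp only [ha_def, hb_def]
      rw [if_pos hjN]
      have hrhs : (N.choose j : ℝ) * x ^ j * (x ^ (m + N) / ((m + N).factorial : ℝ))
          = (N.choose j : ℝ) * x ^ (k + N) / ((m + N).factorial : ℝ) := by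
        rw [← hxpow]; ring
      rw [hrhs]
      have hmN : (0:ℝ) < ((m + N).factorial : ℝ) := by positivity
      have hkN' : (0:ℝ) < (Nat.factorial k : ℝ) * (Nat.factorial N : ℝ) := by positivity
      rw [div_le_div_iff₀ hkN' hmN]
      have hx2 : (0:ℝ) ≤ x ^ (k + N) := by positivity
      nlinarith [mul_le_mul_of_nonneg_left hfact hx2]
    · apply Summable.congr ((Real.summable_pow_div_factorial x).mul_right
        (x ^ N / (Nat.factorial N : ℝ)))
      intro k
      rw [pow_add]
      have h1 : (0:ℝ) < (Nat.factorial k : ℝ) := by positivity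
      have h2 : (0:ℝ) < (Nat.factorial N : ℝ) := by positivity
      field_simp
      try ring
    · exact ha.mul_of_nonneg hb ha0 hb0
  have hprod : (1 + x) ^ N * tsum b
      = ∑' z : ℕ × ℕ, a z.1 * b z.2 := by
    rw [← hsum_a]
    apply tsum_mul_tsum_of_summable_norm
    · apply Summable.congr (summable_abs_iff.2 ha)
      intro j; rw [Real.norm_eq_abs]
    · apply Summable.congr (summable_abs_iff.2 hb)
      intro m; rw [Real.norm_eq_abs]
  have hlhs : (∑' k : ℕ, x ^ (k + N) / ((Nat.factorial k : ℝ) * (Nat.factorial N : ℝ)))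
      = x ^ N / (Nat.factorial N : ℝ) * Real.exp x := by
    rw [hexp, ← tsum_mul_left]
    apply tsum_congr
    intro k
    rw [pow_add]
    have h1 : (0:ℝ) < (Nat.factorial k : ℝ) := by positivity
    have h2 : (0:ℝ) < (Nat.factorial N : ℝ) := by positivity
    field_simp
  rw [hlhs, ← hprod] at key
  have hpow : (0:ℝ) < (1 + x) ^ N := pow_pos hx1 N
  rw [div_pow]
  have heq : 1 / (Nat.factorial N : ℝ) * (x ^ N / (1 + x) ^ N) * Real.exp x
      = (x ^ N / (Nat.factorial N : ℝ) * Real.exp x) / (1 + x) ^ N := by ring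
  rw [heq, div_le_iff₀ hpow, mul_comm (tsum b) ((1+x)^N)]
  exact key
end

section
/- Let {Λ_k}_{k≥1} be a strictly increasing sequence of positive real numbers satisfying k - α ≤ p√(Λ_k) ≤ k + α for all k ≥ 1, with p > 0 and α > 0. Then for all integers k, n ≥ 1 with k - n ≥ 3α one has Λ_k - Λ_n ≥ (1/(3p²))·(k² - n²). -/
theorem stmt_8 (Λ : ℕ → ℝ) (p α : ℝ) (hp : 0 < p) (hα : 0 < α)
    (hpos : ∀ k, 1 ≤ k → 0 < Λ k)
    (hmono : ∀ n k : ℕ, 1 ≤ n → n < k → Λ n < Λ k)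
    (hb : ∀ k : ℕ, 1 ≤ k → (k : ℝ) - α ≤ p * Real.sqrt (Λ k) ∧
      p * Real.sqrt (Λ k) ≤ (k : ℝ) + α) :
    ∀ k n : ℕ, 1 ≤ n → (n : ℝ) + 3 * α ≤ (k : ℝ) →
      (1 / (3 * p ^ 2)) * ((k : ℝ) ^ 2 - (n : ℝ) ^ 2) ≤ Λ k - Λ n := by
  intro k n hn hkn
  have hn1 : (1:ℝ) ≤ n := by exact_mod_cast hn
  have hk1 : (1:ℝ) ≤ k := by nlinarith
  have hk : 1 ≤ k := by exact_mod_cast hk1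
  obtain ⟨hbk1, _⟩ := hb k hk
  obtain ⟨_, hbn2⟩ := hb n hn
  have hΛk := hpos k hk
  have hΛn := hpos n hn
  have sqk : (Real.sqrt (Λ k))^2 = Λ k := Real.sq_sqrt hΛk.le
  have sqn : (Real.sqrt (Λ n))^2 = Λ n := Real.sq_sqrt hΛn.le
  have hsn : 0 ≤ Real.sqrt (Λ n) := Real.sqrt_nonneg _
  have hkα : 0 ≤ (k:ℝ) - α := by nlinarith
  have h1 : ((k:ℝ) - α)^2 ≤ p^2 * Λ k := by nlinarith
  have h2 : p^2 * Λ n ≤ ((n:ℝ) + α)^2 := by nlinarith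
  rw [div_mul_eq_mul_div, one_mul, div_le_iff₀ (by positivity : (0:ℝ) < 3 * p ^ 2)]
  nlinarith [sq_nonneg ((k:ℝ) + n)]
end

section
/- Fix an integer m ≥ 2 and write the set Λ = {k² + (ℓ-1)/m : k ≥ 1, 1 ≤ ℓ ≤ m} as an increasing sequence {Λ_j}_{j≥1}, so that Λ_{m·t + ℓ} = (t+1)² + (ℓ-1)/m for t ≥ 0 and 1 ≤ ℓ ≤ m. Then for all j, n ≥ 1 with j - n ≥ m one has Λ_j - Λ_n ≥ (2/((2m-1)(2m+1)))·(j² - n²). -/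
lemma aux_poly (M tn ln tj lj : ℝ) (hM : 2 ≤ M) (h1 : 1 ≤ ln) (h2 : ln ≤ M)
    (h3 : 1 ≤ lj) (h4 : lj ≤ M) (h5 : 0 ≤ tn) (h6 : tn + 1 ≤ tj) :
    2 * M * ((M * tj + lj) ^ 2 - (M * tn + ln) ^ 2) ≤
      (M * ((tj + 1) ^ 2 - (tn + 1) ^ 2) + (lj - ln)) * ((2 * M - 1) * (2 * M + 1)) := by
  have hM0 : (0:ℝ) < M := by linarith
  have hA : (0:ℝ) ≤ 2 * M * ((M * (tj + 1) - (M * tj + lj)) * (M * (tj + 1) + (M * tj + lj))) := by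
    have : (0:ℝ) ≤ M * (tj + 1) - (M * tj + lj) := by nlinarith
    have h' : (0:ℝ) ≤ M * (tj + 1) + (M * tj + lj) := by nlinarith
    positivity
  have hB : (0:ℝ) ≤ 2 * M * (((M * tn + ln) - (M * tn + 1)) * ((M * tn + ln) + (M * tn + 1))) := by
    have : (0:ℝ) ≤ (M * tn + ln) - (M * tn + 1) := by linarith
    have h' : (0:ℝ) ≤ (M * tn + ln) + (M * tn + 1) := by nlinarith
    positivity
  have hC : (0:ℝ) ≤ M * (2 * M ^ 2 - 1) * ((tj - tn - 1) * (tj + tn + 2)) := by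
    have : (0:ℝ) ≤ tj - tn - 1 := by linarith
    have h' : (0:ℝ) ≤ tj + tn + 2 := by linarith
    have h'' : (0:ℝ) ≤ M * (2 * M ^ 2 - 1) := by nlinarith
    positivity
  have hD : (0:ℝ) ≤ M * (2 * M ^ 2 - 1) * (tj - tn - 1) := by
    have : (0:ℝ) ≤ tj - tn - 1 := by linarith
    have h'' : (0:ℝ) ≤ M * (2 * M ^ 2 - 1) := by nlinarith
    positivity
  have hE : (0:ℝ) ≤ tn * (4 * M ^ 2 - 2 * M) := by
    have h'' : (0:ℝ) ≤ 4 * M ^ 2 - 2 * M := by nlinarith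
    positivity
  have h5' : (0:ℝ) ≤ (4 * M ^ 2 - 1) * (lj - ln - 1 + M) := by
    have : (0:ℝ) ≤ 4 * M ^ 2 - 1 := by nlinarith
    have h' : (0:ℝ) ≤ lj - ln - 1 + M := by linarith
    positivity
  nlinarith [hA, hB, hC, hD, hE, h5']

theorem stmt_14 (m : ℕ) (hm : 2 ≤ m) (Λ : ℕ → ℝ)
    (hΛ : ∀ t l : ℕ, 1 ≤ l → l ≤ m →
      Λ (m * t + l) = ((t : ℝ) + 1) ^ 2 + ((l : ℝ) - 1) / m) :
    ∀ j n : ℕ, 1 ≤ n → n + m ≤ j →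
      (2 / ((2 * (m : ℝ) - 1) * (2 * (m : ℝ) + 1))) * ((j : ℝ) ^ 2 - (n : ℝ) ^ 2) ≤
        Λ j - Λ n := by
  intro j n hn hjn
  have hm0 : 0 < m := by omega
  obtain ⟨tn, ln, hln1, hlnm, hneq⟩ : ∃ t l, 1 ≤ l ∧ l ≤ m ∧ n = m * t + l := by
    refine ⟨(n - 1) / m, (n - 1) % m + 1, by omega, ?_, ?_⟩
    · have := Nat.mod_lt (n - 1) hm0; omega
    · have := Nat.div_add_mod (n - 1) m; omega
  obtain ⟨tj, lj, hlj1, hljm, hjeq⟩ : ∃ t l, 1 ≤ l ∧ l ≤ m ∧ j = m * t + l := by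
    refine ⟨(j - 1) / m, (j - 1) % m + 1, by omega, ?_, ?_⟩
    · have := Nat.mod_lt (j - 1) hm0; omega
    · have := Nat.div_add_mod (j - 1) m; omega
  have htt : tn + 1 ≤ tj := by
    have h2 : m * tn < m * tj := by omega
    have := Nat.lt_of_mul_lt_mul_left h2
    omega
  have hMR : (2:ℝ) ≤ (m:ℝ) := by exact_mod_cast hm
  have hM0 : (0:ℝ) < (m:ℝ) := by linarith
  have hd : (0:ℝ) < (2 * (m:ℝ) - 1) * (2 * (m:ℝ) + 1) := by nlinarith
  rw [hjeq, hneq, hΛ tn ln hln1 hlnm, hΛ tj lj hlj1 hljm]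
  have hln1R : (1:ℝ) ≤ (ln:ℝ) := by exact_mod_cast hln1
  have hlnmR : (ln:ℝ) ≤ (m:ℝ) := by exact_mod_cast hlnm
  have hlj1R : (1:ℝ) ≤ (lj:ℝ) := by exact_mod_cast hlj1
  have hljmR : (lj:ℝ) ≤ (m:ℝ) := by exact_mod_cast hljm
  have httR : (tn:ℝ) + 1 ≤ (tj:ℝ) := by exact_mod_cast htt
  have htn0 : (0:ℝ) ≤ (tn:ℝ) := Nat.cast_nonneg tn
  have key := aux_poly (m:ℝ) (tn:ℝ) (ln:ℝ) (tj:ℝ) (lj:ℝ) hMR hln1R hlnmR hlj1R hljmR htn0 httR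
  have heq : ((tj:ℝ) + 1) ^ 2 + ((lj:ℝ) - 1) / m - (((tn:ℝ) + 1) ^ 2 + ((ln:ℝ) - 1) / m)
      = ((m:ℝ) * (((tj:ℝ) + 1) ^ 2 - ((tn:ℝ) + 1) ^ 2) + ((lj:ℝ) - (ln:ℝ))) / m := by
    field_simp
    ring
  push_cast
  rw [heq, div_mul_eq_mul_div, div_le_div_iff₀ hd hM0]
  nlinarith [key]
end

section
/- Fix an integer m ≥ 2 and the increasing sequence Λ_{m·t + ℓ} = (t+1)² + (ℓ-1)/m (t ≥ 0, 1 ≤ ℓ ≤ m). Then for all j > n ≥ 1 one has Λ_j - Λ_n ≤ ((4m-1)/(m(2m+1)))·(j² - n²). -/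
/-! Each step Λ (k + 1) - Λ k is either 1 / m (inside a block of m consecutive indices) or,
when k = m (t + 1) closes a block, (t + 2)² - (t + 1)² - (m - 1) / m = (2k + 1) / m. In both
cases it is at most (2k + 1) / m = ((k + 1)² - k²) / m, so telescoping gives
Λ j - Λ n ≤ (j² - n²) / m, and 1 / m ≤ (4m - 1) / (m (2m + 1)) because 2m + 1 ≤ 4m - 1. -/

theorem sub_le_mul_sq_sub_sq_of_succ {f : ℕ → ℝ} {c : ℝ} {n : ℕ}
    (hf : ∀ k ≥ n, f (k + 1) - f k ≤ c * (2 * k + 1)) {j : ℕ} (hnj : n ≤ j) :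
    f j - f n ≤ c * ((j : ℝ) ^ 2 - (n : ℝ) ^ 2) := by
  have hmono : MonotoneOn (fun k : ℕ => c * (k : ℝ) ^ 2 - f k) (Set.Ici n) :=
    monotoneOn_nat_Ici_of_le_succ fun k hk => by
      have := hf k hk
      push_cast
      linarith
  have := hmono Set.self_mem_Ici hnj hnj
  simp only at this
  linarith

theorem inv_le_div_mul_two_mul_add_one {x : ℝ} (hx : 1 ≤ x) :
    1 / x ≤ (4 * x - 1) / (x * (2 * x + 1)) := by
  rw [div_le_div_iff₀ (by positivity) (by positivity)]
  nlinarith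

section BlockSequence

variable {m : ℕ} {Λ : ℕ → ℝ}

theorem exists_eq_mul_add_of_one_le (hm : 0 < m) {k : ℕ} (hk : 1 ≤ k) :
    ∃ t l, 1 ≤ l ∧ l ≤ m ∧ k = m * t + l :=
  ⟨(k - 1) / m, (k - 1) % m + 1, by omega, by have := Nat.mod_lt (k - 1) hm; omega,
    by have := Nat.div_add_mod (k - 1) m; omega⟩

theorem succ_sub_le_of_block (hm : 0 < m)
    (hΛ : ∀ t l : ℕ, 1 ≤ l → l ≤ m →
      Λ (m * t + l) = ((t : ℝ) + 1) ^ 2 + ((l : ℝ) - 1) / m)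
    {k : ℕ} (hk : 1 ≤ k) :
    Λ (k + 1) - Λ k ≤ 1 / (m : ℝ) * (2 * k + 1) := by
  obtain ⟨t, l, hl1, hlm, rfl⟩ := exists_eq_mul_add_of_one_le hm hk
  rcases hlm.lt_or_eq with hlt | hlm
  · have hstep : Λ (m * t + l + 1) - Λ (m * t + l) = 1 / m := by
      rw [add_assoc, hΛ t (l + 1) (by omega) hlt, hΛ t l hl1 hlt.le]
      push_cast
      ring
    rw [hstep]
    exact le_mul_of_one_le_right (by positivity)
      (by linarith [Nat.cast_nonneg (α := ℝ) (m * t + l)])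
  · subst l
    have hstep : Λ (m * t + m + 1) - Λ (m * t + m) =
        1 / (m : ℝ) * (2 * ((m * t + m : ℕ) : ℝ) + 1) := by
      rw [show m * t + m + 1 = m * (t + 1) + 1 by ring, hΛ (t + 1) 1 le_rfl hm, hΛ t m hm le_rfl]
      push_cast
      field_simp
      ring
    exact hstep.le

end BlockSequence

theorem stmt_15 (m : ℕ) (hm : 2 ≤ m) (Λ : ℕ → ℝ)
    (hΛ : ∀ t l : ℕ, 1 ≤ l → l ≤ m →
      Λ (m * t + l) = ((t : ℝ) + 1) ^ 2 + ((l : ℝ) - 1) / m) :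
    ∀ j n : ℕ, 1 ≤ n → n < j →
      Λ j - Λ n ≤ ((4 * (m : ℝ) - 1) / ((m : ℝ) * (2 * (m : ℝ) + 1))) *
        ((j : ℝ) ^ 2 - (n : ℝ) ^ 2) := by
  intro j n hn hnj
  have hsq : (0 : ℝ) ≤ (j : ℝ) ^ 2 - (n : ℝ) ^ 2 := by
    have : (n : ℝ) ≤ j := by exact_mod_cast hnj.le
    nlinarith [(Nat.cast_nonneg n : (0 : ℝ) ≤ n)]
  calc Λ j - Λ n ≤ 1 / (m : ℝ) * ((j : ℝ) ^ 2 - (n : ℝ) ^ 2) :=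
        sub_le_mul_sq_sub_sq_of_succ
          (fun k hk => succ_sub_le_of_block (by omega) hΛ (hn.trans hk)) hnj.le
    _ ≤ _ := mul_le_mul_of_nonneg_right
        (inv_le_div_mul_two_mul_add_one (by exact_mod_cast (by omega : 1 ≤ m))) hsq
end

section
/- Fix an integer m ≥ 2 and the sequence Λ_{m·t + ℓ} = (t+1)² + (ℓ-1)/m (t ≥ 0, 1 ≤ ℓ ≤ m). For each q with 1 ≤ q ≤ m-1, the condition 'there exists ρ > 0 with Λ_j - Λ_n ≥ ρ(j² - n²) for all j - n ≥ q' fails; more precisely, with n = m·t + 1 and j = m·t + q + 1, the ratio (Λ_j - Λ_n)/(j² - n²) = 1/(m(2mt + 2 + q)) tends to 0 as t → ∞. -/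
theorem stmt_16 (m : ℕ) (hm : 2 ≤ m) (q : ℕ) (hq1 : 1 ≤ q) (hqm : q ≤ m - 1) (Λ : ℕ → ℝ)
    (hΛ : ∀ t l : ℕ, 1 ≤ l → l ≤ m →
      Λ (m * t + l) = ((t : ℝ) + 1) ^ 2 + ((l : ℝ) - 1) / m) :
    (¬ ∃ ρ : ℝ, 0 < ρ ∧ ∀ j n : ℕ, 1 ≤ n → n + q ≤ j →
        ρ * ((j : ℝ) ^ 2 - (n : ℝ) ^ 2) ≤ Λ j - Λ n) ∧
    (∀ t : ℕ, (Λ (m * t + q + 1) - Λ (m * t + 1)) /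
        (((m * t + q + 1 : ℕ) : ℝ) ^ 2 - ((m * t + 1 : ℕ) : ℝ) ^ 2)
      = 1 / ((m : ℝ) * (2 * (m : ℝ) * (t : ℝ) + 2 + (q : ℝ)))) ∧
    Filter.Tendsto (fun t : ℕ => (Λ (m * t + q + 1) - Λ (m * t + 1)) /
        (((m * t + q + 1 : ℕ) : ℝ) ^ 2 - ((m * t + 1 : ℕ) : ℝ) ^ 2))
      Filter.atTop (nhds 0) := by
  have hm0 : (0 : ℝ) < m := by positivity
  have hq0 : (0 : ℝ) < q := by exact_mod_cast hq1
  have hq1m : q + 1 ≤ m := by omega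
  have hdiff : ∀ t : ℕ, Λ (m * t + q + 1) - Λ (m * t + 1) = q / m := by
    intro t
    have h1 := hΛ t (q + 1) (by omega) hq1m
    have h2 := hΛ t 1 (by omega) (by omega)
    rw [show m * t + q + 1 = m * t + (q + 1) by ring] at *
    rw [h1, h2]
    push_cast
    ring
  have hden : ∀ t : ℕ, (((m * t + q + 1 : ℕ) : ℝ) ^ 2 - ((m * t + 1 : ℕ) : ℝ) ^ 2)
      = q * (2 * m * t + q + 2) := by
    intro t; push_cast; ring
  have hmid : ∀ t : ℕ, (Λ (m * t + q + 1) - Λ (m * t + 1)) /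
        (((m * t + q + 1 : ℕ) : ℝ) ^ 2 - ((m * t + 1 : ℕ) : ℝ) ^ 2)
      = 1 / ((m : ℝ) * (2 * (m : ℝ) * (t : ℝ) + 2 + (q : ℝ))) := by
    intro t
    rw [hdiff, hden]
    have ht : (0 : ℝ) ≤ (t : ℝ) := Nat.cast_nonneg t
    have h1 : (0:ℝ) < 2 * m * t + q + 2 := by positivity
    have h2 : (0:ℝ) < 2 * m * t + 2 + q := by positivity
    field_simp
    ring
  refine ⟨?_, hmid, ?_⟩
  · rintro ⟨ρ, hρ, h⟩
    obtain ⟨t, ht⟩ := exists_nat_gt ((q / m) / (ρ * q * (2 * m)))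
    have hkey := h (m * t + q + 1) (m * t + 1) (by omega) (by omega)
    rw [hden] at hkey
    have hdiff' := hdiff t
    rw [hdiff'] at hkey
    have ht0 : (0 : ℝ) ≤ (t : ℝ) := Nat.cast_nonneg t
    have h3 : (q:ℝ)/m < t * (ρ * q * (2*m)) := (div_lt_iff₀ (by positivity)).mp ht
    nlinarith [mul_pos (mul_pos hρ hq0) (by positivity : (0:ℝ) < (q:ℝ)+2)]
  · have : Filter.Tendsto (fun t : ℕ => 1 / ((m : ℝ) * (2 * (m : ℝ) * (t : ℝ) + 2 + (q : ℝ))))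
        Filter.atTop (nhds 0) := by
      simp_rw [one_div]
      apply Filter.Tendsto.inv_tendsto_atTop
      have : Filter.Tendsto (fun t : ℕ => (t : ℝ)) Filter.atTop Filter.atTop :=
        tendsto_natCast_atTop_atTop
      exact Filter.Tendsto.const_mul_atTop hm0
        (Filter.tendsto_atTop_add_const_right _ _
          (Filter.tendsto_atTop_add_const_right _ _
            (Filter.Tendsto.const_mul_atTop (by positivity) this)))
    simp only [hmid]
    simpa [one_div] using this
end

section
/- Let T > 0, γ ∈ (0,1), and define h(x) = -Tx + x^γ for x > 0. Assume T < γ·((√2-1)/√2)^{2(1-γ)}. Then there exists a positive integer k₀ such that h(k₀²) ≥ ((1+log 2)/(2e))·(1-γ)/T^{γ/(1-γ)}. -/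
set_option maxHeartbeats 1600000 in
theorem stmt_17 (T γ : ℝ) (hT : 0 < T) (hγ0 : 0 < γ) (hγ1 : γ < 1)
    (hsmall : T < γ * ((Real.sqrt 2 - 1) / Real.sqrt 2) ^ (2 * (1 - γ))) :
    ∃ k₀ : ℕ, 1 ≤ k₀ ∧
      ((1 + Real.log 2) / (2 * Real.exp 1)) * (1 - γ) / T ^ (γ / (1 - γ)) ≤
        -T * ((k₀ : ℝ) ^ 2) + ((k₀ : ℝ) ^ 2) ^ γ := by
  have hβ : 0 < 1 - γ := by linarith
  have h1γ : (1:ℝ) - γ ≠ 0 := by linarith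
  set β : ℝ := 1 - γ with hβdef
  have hβne : β ≠ 0 := ne_of_gt hβ
  -- basic facts about √2
  have hs2sq : Real.sqrt 2 ^ 2 = 2 := Real.sq_sqrt (by norm_num)
  have hs2pos : 0 < Real.sqrt 2 := Real.sqrt_pos.mpr (by norm_num)
  have hs2gt1 : 1 < Real.sqrt 2 := by nlinarith
  set c : ℝ := (Real.sqrt 2 - 1) / Real.sqrt 2 with hcdef
  have hcpos : 0 < c := div_pos (by linarith) hs2pos
  -- logs
  set t : ℝ := Real.log T with htdef
  set g : ℝ := Real.log γ with hgdef
  set L : ℝ := g - t with hLdef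
  -- from hsmall : t < g + 2β log c, i.e. L > -2β log c
  have hrw : c ^ (2 * β : ℝ) = Real.exp (2 * β * Real.log c) := by
    rw [Real.rpow_def_of_pos hcpos]
    ring_nf
  have hlogsmall : t < g + 2 * β * Real.log c := by
    have h1 : Real.log T < Real.log (γ * c ^ (2 * β : ℝ)) :=
      Real.log_lt_log hT hsmall
    rwa [hrw, Real.log_mul (ne_of_gt hγ0) (ne_of_gt (Real.exp_pos _)),
      Real.log_exp] at h1
  have hL : -(2 * β * Real.log c) < L := by simp only [hLdef]; linarith
  -- a = exp(L/(2β)) = √(x*)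
  set a : ℝ := Real.exp (L / (2 * β)) with hadef
  have hapos : 0 < a := Real.exp_pos _
  have ha_gt : 1 / c < a := by
    have h1 : Real.log (1 / c) < L / (2 * β) := by
      rw [Real.log_div one_ne_zero (ne_of_gt hcpos), Real.log_one]
      rw [lt_div_iff₀ (by linarith : 0 < 2 * β)]
      linarith
    calc 1 / c = Real.exp (Real.log (1 / c)) :=
          (Real.exp_log (by positivity)).symm
      _ < a := Real.exp_lt_exp.mpr h1
  -- 1/c = √2/(√2-1), and a(√2-1) > √2
  have hkey : a * (Real.sqrt 2 - 1) > Real.sqrt 2 := by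
    have h1c : 1 / c = Real.sqrt 2 / (Real.sqrt 2 - 1) := by
      rw [hcdef, one_div_div]
    rw [h1c] at ha_gt
    have := (div_lt_iff₀ (by linarith : (0:ℝ) < Real.sqrt 2 - 1)).mp ha_gt
    linarith
  have ha3 : 3 < a := by
    have h9 := mul_lt_mul_of_pos_right hkey
      (show (0:ℝ) < Real.sqrt 2 + 1 by linarith)
    have h10 : a * (Real.sqrt 2 - 1) * (Real.sqrt 2 + 1)
        = a * (Real.sqrt 2 ^ 2 - 1) := by ring
    rw [h10, hs2sq] at h9
    nlinarith [h9, hs2gt1]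
  -- the integer k₀
  refine ⟨⌊a⌋₊, Nat.le_floor (by push_cast; linarith), ?_⟩
  set k : ℝ := (⌊a⌋₊ : ℝ) with hkdef
  have hk_le_a : k ≤ a := Nat.floor_le hapos.le
  have hk_gt : a - 1 < k := by
    have := Nat.lt_floor_add_one a
    linarith
  have hk_gt_half : a / Real.sqrt 2 < k := by
    have h1 : a / Real.sqrt 2 < a - 1 := by
      rw [div_lt_iff₀ hs2pos]
      nlinarith [hkey]
    linarith
  have hkpos : 0 < k := by linarith
  -- z = k², y = a²/2, x = a²
  set z : ℝ := k ^ 2 with hzdef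
  set y : ℝ := a ^ 2 / 2 with hydef
  have hzpos : 0 < z := by positivity
  have hypos : 0 < y := by positivity
  have hy_lt_z : y < z := by
    have h1 : a < k * Real.sqrt 2 := by
      rw [div_lt_iff₀ hs2pos] at hk_gt_half; linarith
    have h2 : a * a < k * Real.sqrt 2 * (k * Real.sqrt 2) :=
      mul_self_lt_mul_self hapos.le h1
    have h3 : k * Real.sqrt 2 * (k * Real.sqrt 2) = k ^ 2 * Real.sqrt 2 ^ 2 := by
      ring
    rw [h3, hs2sq] at h2
    simp only [hydef, hzdef]
    linarith
  clear_value β c t g L a k z y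
  have hz_le_x : z ≤ a ^ 2 := by
    rw [hzdef]
    exact pow_le_pow_left₀ hkpos.le hk_le_a 2
  -- a² = exp(L/β)
  have hasq : a ^ 2 = Real.exp (L / β) := by
    rw [hadef, ← Real.exp_nat_mul]
    congr 1
    field_simp
    ring
  -- x^(γ-1) = T/γ
  have hx_pow : (a ^ 2 : ℝ) ^ (γ - 1 : ℝ) = T / γ := by
    rw [hasq, Real.rpow_def_of_pos (Real.exp_pos _), Real.log_exp]
    have h1 : L / β * (γ - 1) = -L := by
      have hb : γ - 1 = -β := by rw [hβdef]; ring
      rw [hb]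
      field_simp
    rw [h1, hLdef, neg_sub, Real.exp_sub, htdef, hgdef, Real.exp_log hT,
      Real.exp_log hγ0]
  -- monotonicity: -T*y + y^γ ≤ -T*z + z^γ
  have hmono : -T * y + y ^ (γ:ℝ) ≤ -T * z + z ^ (γ:ℝ) := by
    -- Bernoulli
    have hber : (y / z) ^ (γ:ℝ) ≤ 1 + γ * (y / z - 1) := by
      have := rpow_one_add_le_one_add_mul_self
        (s := y / z - 1) (by linarith [div_pos hypos hzpos]) hγ0.le hγ1.le
      simpa using this
    have hzγpos : (0:ℝ) < z ^ (γ:ℝ) := Real.rpow_pos_of_pos hzpos _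
    have hyz : y ^ (γ:ℝ) = (y / z) ^ (γ:ℝ) * z ^ (γ:ℝ) := by
      rw [← Real.mul_rpow (by positivity) hzpos.le,
        div_mul_cancel₀ _ (ne_of_gt hzpos)]
    have h2 : y ^ (γ:ℝ) ≤ z ^ (γ:ℝ) + γ * (z ^ (γ:ℝ) / z) * (y - z) := by
      rw [hyz]
      have := mul_le_mul_of_nonneg_right hber hzγpos.le
      have heq : (1 + γ * (y / z - 1)) * z ^ (γ:ℝ)
          = z ^ (γ:ℝ) + γ * (z ^ (γ:ℝ) / z) * (y - z) := by
        field_simp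
      linarith [heq ▸ this]
    -- z^(γ-1) ≥ x^(γ-1) = T/γ
    have h3 : T / γ ≤ z ^ (γ:ℝ) / z := by
      have h4 : (a ^ 2 : ℝ) ^ (γ - 1 : ℝ) ≤ z ^ (γ - 1 : ℝ) :=
        Real.rpow_le_rpow_of_nonpos hzpos hz_le_x (by linarith)
      have h5 : z ^ (γ - 1 : ℝ) = z ^ (γ:ℝ) / z := by
        rw [Real.rpow_sub hzpos, Real.rpow_one]
      rw [← h5, ← hx_pow]
      exact h4
    have h6 : T * (z - y) ≤ γ * (z ^ (γ:ℝ) / z) * (z - y) := by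
      have h7 : T ≤ γ * (z ^ (γ:ℝ) / z) := by
        rw [div_le_iff₀ hγ0] at h3
        linarith [h3]
      exact mul_le_mul_of_nonneg_right h7 (by linarith)
    linarith [h2, h6]
  -- now bound the target by -T*y + y^γ
  have hE : (0:ℝ) < Real.exp (γ * g / β - γ * t / β) := Real.exp_pos _
  set E : ℝ := Real.exp (γ * g / β - γ * t / β) with hEdef
  clear_value E
  -- T * y = E * γ / 2
  have hTy : T * y = E * γ / 2 := by
    have h1 : T * a ^ 2 = Real.exp (t + L / β) := by
      rw [hasq, ← Real.exp_log hT, ← htdef, ← Real.exp_add]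
    have h2 : t + L / β = (γ * g / β - γ * t / β) + g := by
      field_simp
      rw [hLdef, hβdef]
      ring
    rw [hydef]
    rw [show T * (a ^ 2 / 2) = T * a ^ 2 / 2 by ring, h1, h2, Real.exp_add,
      show Real.exp g = γ by rw [hgdef, Real.exp_log hγ0], hEdef]
  -- y^γ = E * exp(-γ log 2)
  have hyγ : y ^ (γ:ℝ) = E * Real.exp (-(γ * Real.log 2)) := by
    rw [hydef, Real.rpow_def_of_pos (by rw [← hydef]; exact hypos),
      Real.log_div (by positivity) two_ne_zero, hasq, Real.log_exp, hEdef,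
      ← Real.exp_add]
    congr 1
    field_simp
    rw [hLdef, hβdef]
    ring
  -- T^(γ/β) and the target LHS
  have hTpow : T ^ (γ / β : ℝ) = Real.exp (γ * t / β) := by
    rw [Real.rpow_def_of_pos hT, ← htdef]
    ring_nf
  -- the scalar inequality : C β ≤ exp(γ g/β) * (exp(-γ log2) - γ/2)
  have hlog2pos : 0 < Real.log 2 := Real.log_pos (by norm_num)
  have hA : β * (1 + Real.log 2) / 2 ≤ Real.exp (-(γ * Real.log 2)) - γ / 2 := by
    have h1 : -(γ * Real.log 2) = β * Real.log 2 + -Real.log 2 := by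
      simp only [hβdef]; ring
    rw [h1, Real.exp_add, Real.exp_neg, Real.exp_log (by norm_num : (0:ℝ) < 2)]
    have h2 : β * Real.log 2 + 1 ≤ Real.exp (β * Real.log 2) :=
      Real.add_one_le_exp _
    have h3 : (β * Real.log 2 + 1) * (2:ℝ)⁻¹ ≤ Real.exp (β * Real.log 2) * (2:ℝ)⁻¹ :=
      mul_le_mul_of_nonneg_right h2 (by norm_num)
    have hγβ : γ = 1 - β := by rw [hβdef]; ring
    linarith
  have hB : Real.exp (-1 : ℝ) ≤ Real.exp (γ * g / β) := by
    apply Real.exp_le_exp.mpr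
    have h1 : 1 - γ⁻¹ ≤ g := by
      rw [hgdef]; exact Real.one_sub_inv_le_log_of_pos hγ0
    have h2 : γ - 1 ≤ γ * g := by
      have h4 := mul_le_mul_of_nonneg_left h1 hγ0.le
      have h3 : γ * (1 - γ⁻¹) = γ - 1 := by
        field_simp
      linarith [h3, h4]
    rw [le_div_iff₀ hβ]
    simp only [hβdef]
    linarith
  have hC : (1 + Real.log 2) / (2 * Real.exp 1) * β
      ≤ Real.exp (γ * g / β) * (Real.exp (-(γ * Real.log 2)) - γ / 2) := by
    have h0 : (0:ℝ) ≤ β * (1 + Real.log 2) / 2 := by positivity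
    have h1 : Real.exp (-1 : ℝ) * (β * (1 + Real.log 2) / 2)
        ≤ Real.exp (γ * g / β) * (Real.exp (-(γ * Real.log 2)) - γ / 2) :=
      mul_le_mul hB hA h0 (Real.exp_pos _).le
    have h2 : Real.exp (-1 : ℝ) * (β * (1 + Real.log 2) / 2)
        = (1 + Real.log 2) / (2 * Real.exp 1) * β := by
      rw [Real.exp_neg]
      field_simp
    linarith [h2 ▸ h1]
  -- assemble: target ≤ -T*y + y^γ
  have hfinal : (1 + Real.log 2) / (2 * Real.exp 1) * β / T ^ (γ / β : ℝ)
      ≤ -T * y + y ^ (γ:ℝ) := by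
    rw [hTpow, hyγ]
    have h1 : (1 + Real.log 2) / (2 * Real.exp 1) * β / Real.exp (γ * t / β)
        = ((1 + Real.log 2) / (2 * Real.exp 1) * β) * Real.exp (-(γ * t / β)) := by
      rw [Real.exp_neg]
      field_simp
    rw [h1]
    have hEsplit : E = Real.exp (γ * g / β) * Real.exp (-(γ * t / β)) := by
      rw [hEdef, ← Real.exp_add, sub_eq_add_neg]
    have hexppos : (0:ℝ) < Real.exp (-(γ * t / β)) := Real.exp_pos _
    have h2 := mul_le_mul_of_nonneg_right hC hexppos.le
    calc ((1 + Real.log 2) / (2 * Real.exp 1) * β) * Real.exp (-(γ * t / β))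
        ≤ Real.exp (γ * g / β) * (Real.exp (-(γ * Real.log 2)) - γ / 2)
            * Real.exp (-(γ * t / β)) := h2
      _ = -T * y + E * Real.exp (-(γ * Real.log 2)) := by
          rw [neg_mul, hTy, hEsplit]; ring
  linarith [hmono, hfinal]
end
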